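/- Let r ≥ 1, C_A ≥ 1, and suppose A = S J S⁻¹ where S is an invertible complex d×d matrix with ‖S‖₂·‖S⁻¹‖₂ ≤ C_A and J is block-diagonal with Jordan blocks λI_k + N_k (N_k having ones on the superdiagonal and zeros elsewhere) of size k ≤ r and with |λ| ≤ 1 for every block. Then for every k ≥ 1, ‖A^k‖₂ ≤ C(k+r, r−1)·C_A, and for every k ≥ 0, Σ_{s=0}^{k} ‖A^s‖₂ ≤ C(k+r+1, r)·C_A, where C(n, j) denotes the binomial coefficient. -/

import Mathlib

/-!
Split `J = D + N` into its diagonal part `D` and its superdiagonal part `N`. They commute (a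
superdiagonal one only links equal eigenvalues), `‖D‖ ≤ 1` since `|λ| ≤ 1`, `‖N‖ ≤ 1` since `Nᴴ N`
is diagonal with entries in `{0, 1}`, and `N ^ r = 0` because no block is longer than `r`. The
binomial theorem then gives `‖J ^ k‖ ≤ ∑_{m < r} C(k, m) ≤ C(k + r, r - 1)`, conjugating by `S`
costs the factor `‖S‖ ‖S⁻¹‖ ≤ C_A`, and the bound on the partial sums is the hockey-stick identity.
-/

open scoped BigOperators
open Finset

noncomputable def euclNorm {k : ℕ} (x : Fin k → ℝ) : ℝ := Real.sqrt (∑ i, x i ^ 2)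

noncomputable def frobNorm {n m : ℕ} (A : Matrix (Fin n) (Fin m) ℝ) : ℝ :=
  Real.sqrt (∑ i, ∑ j, A i j ^ 2)

noncomputable def spec2Norm {n m : ℕ} (A : Matrix (Fin n) (Fin m) ℝ) : ℝ :=
  sSup ((fun x => euclNorm (A.mulVec x)) '' {x | euclNorm x ≤ 1})

noncomputable def ceuclNorm {k : ℕ} (x : Fin k → ℂ) : ℝ := Real.sqrt (∑ i, ‖x i‖ ^ 2)

noncomputable def cSpec2Norm {n m : ℕ} (A : Matrix (Fin n) (Fin m) ℂ) : ℝ :=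
  sSup ((fun x => ceuclNorm (A.mulVec x)) '' {x | ceuclNorm x ≤ 1})

/-- `J` is a Jordan-form matrix whose blocks `λ Iₖ + Nₖ` have size `k ≤ r` and whose
eigenvalues have modulus at most `1`. -/
def IsJordanForm {d : ℕ} (J : Matrix (Fin d) (Fin d) ℂ) (r : ℕ) : Prop :=
  (∀ i, ‖J i i‖ ≤ 1) ∧
  (∀ i j : Fin d, (j : ℕ) ≠ (i : ℕ) → (j : ℕ) ≠ (i : ℕ) + 1 → J i j = 0) ∧
  (∀ i j : Fin d, (j : ℕ) = (i : ℕ) + 1 → J i j = 0 ∨ (J i j = 1 ∧ J i i = J j j)) ∧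
  (∀ i : ℕ, ∀ _ : i + r < d, ∃ k, ∃ _ : k < r,
      J ⟨i + k, by omega⟩ ⟨i + k + 1, by omega⟩ = 0)

open scoped Matrix.Norms.L2Operator
open Matrix WithLp

namespace Matrix
variable {𝕜 : Type*} [RCLike 𝕜] {m n : Type*} [Fintype m] [Fintype n] [DecidableEq n]

theorem l2_opNorm_eq_sSup (A : Matrix m n 𝕜) :
    ‖A‖ = sSup ((fun x => ‖toLp 2 (A *ᵥ x)‖) '' {x | ‖toLp 2 x‖ ≤ 1}) := by
  rw [l2_opNorm_def, ← ContinuousLinearMap.sSup_unitClosedBall_eq_norm]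
  congr 1
  ext y
  constructor
  · rintro ⟨x, hx, rfl⟩
    exact ⟨ofLp x, by simpa using hx, rfl⟩
  · rintro ⟨x, hx, rfl⟩
    exact ⟨toLp 2 x, by simpa using hx, rfl⟩

theorem l2_opNorm_one_le : ‖(1 : Matrix n n 𝕜)‖ ≤ 1 := by
  rw [← diagonal_one, l2_opNorm_diagonal]
  exact (pi_norm_const_le _).trans norm_one.le

theorem l2_opNorm_pow_le_one {M : Matrix n n 𝕜} (hM : ‖M‖ ≤ 1) (a : ℕ) : ‖M ^ a‖ ≤ 1 := by
  induction a with
  | zero => exact pow_zero M ▸ l2_opNorm_one_le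
  | succ a ih =>
    rw [pow_succ]
    exact (l2_opNorm_mul _ _).trans (mul_le_one₀ ih (norm_nonneg _) hM)

theorem l2_opNorm_diagonal_le_one {v : n → 𝕜} (hv : ∀ i, ‖v i‖ ≤ 1) : ‖diagonal v‖ ≤ 1 := by
  rw [l2_opNorm_diagonal]
  exact (pi_norm_le_iff_of_nonneg zero_le_one).mpr hv

/-- `Mᴴ * M` is diagonal, so the C⋆-identity reduces the claim to the column norms. -/
theorem l2_opNorm_le_one_of_partial_perm {M : Matrix m n 𝕜}
    (hrow : ∀ i j j', M i j ≠ 0 → M i j' ≠ 0 → j = j')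
    (hcol : ∀ i i' j, M i j ≠ 0 → M i' j ≠ 0 → i = i')
    (hle : ∀ i j, ‖M i j‖ ≤ 1) : ‖M‖ ≤ 1 := by
  have hgram : Mᴴ * M = diagonal fun j => ∑ i, star (M i j) * M i j := by
    ext j j'
    rw [mul_apply, diagonal_apply]
    split_ifs with hjj'
    · subst hjj'
      rfl
    · refine sum_eq_zero fun i _ => ?_
      by_contra h
      exact hjj' (hrow i j j' (star_ne_zero.mp (left_ne_zero_of_mul h)) (right_ne_zero_of_mul h))
  have hcolsum : ∀ j, ‖∑ i, star (M i j) * M i j‖ ≤ 1 := by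
    intro j
    by_cases hj : ∃ i, M i j ≠ 0
    · obtain ⟨i₀, hi₀⟩ := hj
      have hother : ∀ i, i ≠ i₀ → M i j = 0 := fun i hi => by
        by_contra h
        exact hi (hcol i i₀ j h hi₀)
      rw [sum_eq_single i₀ (fun i _ hi => by rw [hother i hi, mul_zero]) (by simp),
        norm_mul, norm_star]
      exact mul_le_one₀ (hle i₀ j) (norm_nonneg _) (hle i₀ j)
    · simp only [ne_eq, not_exists, not_not] at hj
      simp [hj]
  have hsq : ‖M‖ * ‖M‖ ≤ 1 := by
    rw [← l2_opNorm_conjTranspose_mul_self, hgram]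
    exact l2_opNorm_diagonal_le_one hcolsum
  nlinarith [norm_nonneg M]

end Matrix

theorem euclNorm_eq_norm {k : ℕ} (x : Fin k → ℝ) : euclNorm x = ‖toLp 2 x‖ := by
  simp [euclNorm, EuclideanSpace.norm_eq]

theorem ceuclNorm_eq_norm {k : ℕ} (x : Fin k → ℂ) : ceuclNorm x = ‖toLp 2 x‖ := by
  simp [ceuclNorm, EuclideanSpace.norm_eq]

theorem spec2Norm_eq_l2_opNorm {n m : ℕ} (A : Matrix (Fin n) (Fin m) ℝ) : spec2Norm A = ‖A‖ := by
  simp only [spec2Norm, euclNorm_eq_norm, l2_opNorm_eq_sSup]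

theorem cSpec2Norm_eq_l2_opNorm {n m : ℕ} (A : Matrix (Fin n) (Fin m) ℂ) :
    cSpec2Norm A = ‖A‖ := by
  simp only [cSpec2Norm, ceuclNorm_eq_norm, l2_opNorm_eq_sSup]

theorem EuclideanSpace.norm_toLp_ofReal_comp {ι : Type*} [Fintype ι] (v : ι → ℝ) :
    ‖toLp 2 (((↑) : ℝ → ℂ) ∘ v)‖ = ‖toLp 2 v‖ := by
  simp [EuclideanSpace.norm_eq]

theorem Matrix.l2_opNorm_le_map_ofReal {m n : Type*} [Fintype m] [Fintype n] [DecidableEq n]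
    (A : Matrix m n ℝ) : ‖A‖ ≤ ‖A.map ((↑) : ℝ → ℂ)‖ := by
  rw [l2_opNorm_eq_sSup]
  refine Real.sSup_le (fun _ ⟨x, hx, hy⟩ => hy ▸ ?_) (norm_nonneg _)
  have hmap : A.map ((↑) : ℝ → ℂ) *ᵥ (((↑) : ℝ → ℂ) ∘ x) = ((↑) : ℝ → ℂ) ∘ (A *ᵥ x) :=
    funext fun i => (RingHom.map_mulVec Complex.ofRealHom A x i).symm
  have hle := l2_opNorm_mulVec (A.map ((↑) : ℝ → ℂ)) (toLp 2 (((↑) : ℝ → ℂ) ∘ x))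
  simp only [PiLp.coe_symm_continuousLinearEquiv, hmap,
    EuclideanSpace.norm_toLp_ofReal_comp] at hle
  exact hle.trans (mul_le_of_le_one_right (norm_nonneg _) hx)

namespace Nat

theorem sum_range_choose_le_choose_add (k r : ℕ) :
    ∑ m ∈ range r, k.choose m ≤ (k + r).choose (r - 1) := by
  rcases r with _ | q
  · simp
  calc ∑ m ∈ range (q + 1), k.choose m
      ≤ ∑ m ∈ range (q + 1), (m + k).choose k := by
        gcongr with m
        rw [add_comm, choose_symm_add]
        exact choose_le_choose m (le_add_right k m)
    _ = (k + (q + 1)).choose (q + 1 - 1) := by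
        rw [sum_range_add_choose, add_tsub_cancel_right, show k + (q + 1) = q + k + 1 by ring]
        exact choose_symm_of_eq_add (by ring)

theorem sum_range_choose_add_le {r : ℕ} (hr : 1 ≤ r) (k : ℕ) :
    ∑ s ∈ range (k + 1), (s + r).choose (r - 1) ≤ (k + r + 1).choose r := by
  obtain ⟨q, rfl⟩ : ∃ q, r = q + 1 := ⟨r - 1, by omega⟩
  have hockey := sum_range_add_choose (k + 1) q
  rw [sum_range_succ'] at hockey
  calc ∑ s ∈ range (k + 1), (s + (q + 1)).choose (q + 1 - 1)
      = ∑ s ∈ range (k + 1), (s + 1 + q).choose q := by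
        simp only [add_tsub_cancel_right, add_assoc, add_comm 1 q]
    _ ≤ ∑ s ∈ range (k + 1), (s + 1 + q).choose q + (0 + q).choose q := le_add_right _ _
    _ = (k + (q + 1) + 1).choose (q + 1) := by rw [hockey]; ring_nf

end Nat

theorem norm_add_pow_le_sum_choose {R : Type*} [NormedRing R] {x y : R} (hxy : Commute x y)
    (hx : ∀ a, ‖x ^ a‖ ≤ 1) (hy : ∀ a, ‖y ^ a‖ ≤ 1) {r : ℕ} (hyr : y ^ r = 0) (k : ℕ) :
    ‖(x + y) ^ k‖ ≤ ∑ m ∈ range r, (k.choose m : ℝ) := by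
  have hterm : ∀ m,
      ‖k.choose m • (y ^ m * x ^ (k - m))‖ ≤ if m < r then (k.choose m : ℝ) else 0 := by
    intro m
    split_ifs with hm
    · calc ‖k.choose m • (y ^ m * x ^ (k - m))‖ ≤ k.choose m * (‖y ^ m‖ * ‖x ^ (k - m)‖) :=
            norm_nsmul_le.trans (by gcongr; exact norm_mul_le _ _)
        _ ≤ k.choose m * (1 * 1) := by gcongr; exacts [hy m, hx _]
        _ = k.choose m := by ring
    · rw [pow_eq_zero_of_le (not_lt.mp hm) hyr]
      simp
  rw [add_comm, hxy.symm.add_pow]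
  simp_rw [← nsmul_eq_mul']
  calc ‖∑ m ∈ range (k + 1), k.choose m • (y ^ m * x ^ (k - m))‖
      ≤ ∑ m ∈ range (k + 1), if m < r then (k.choose m : ℝ) else 0 :=
        (norm_sum_le _ _).trans (sum_le_sum fun m _ => hterm m)
    _ = ∑ m ∈ (range (k + 1)).filter (· < r), (k.choose m : ℝ) := (sum_filter _ _).symm
    _ ≤ ∑ m ∈ range r, (k.choose m : ℝ) :=
        sum_le_sum_of_subset_of_nonneg (fun m hm => by simp at hm ⊢; omega)
          (fun _ _ _ => Nat.cast_nonneg _)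

theorem Matrix.pow_apply_ne_zero_of_superdiag {R : Type*} [Semiring R] {d : ℕ}
    {N : Matrix (Fin d) (Fin d) R} (hN : ∀ i j : Fin d, (j : ℕ) ≠ i + 1 → N i j = 0) (t : ℕ)
    {i j : Fin d} (hij : (N ^ t) i j ≠ 0) :
    (j : ℕ) = i + t ∧ ∀ a b : Fin d, (i : ℕ) ≤ a → (b : ℕ) = a + 1 → (b : ℕ) ≤ j → N a b ≠ 0 := by
  induction t generalizing j with
  | zero =>
    obtain rfl : i = j := by
      by_contra h
      exact hij (by rw [pow_zero, one_apply_ne h])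
    exact ⟨rfl, fun a b hia hb hbj => absurd hbj (by omega)⟩
  | succ t ih =>
    rw [pow_succ, mul_apply] at hij
    obtain ⟨l, -, hl⟩ := exists_ne_zero_of_sum_ne_zero hij
    have hil := ih (left_ne_zero_of_mul hl)
    have hlj : N l j ≠ 0 := right_ne_zero_of_mul hl
    have hjl : (j : ℕ) = l + 1 := by
      by_contra h
      exact hlj (hN l j h)
    refine ⟨by omega, fun a b hia hb hbj => ?_⟩
    rcases Nat.lt_or_ge (b : ℕ) j with hbj' | hbj'
    · exact hil.2 a b hia hb (by omega)
    · obtain rfl : b = j := Fin.ext (by omega)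
      obtain rfl : a = l := Fin.ext (by omega)
      exact hlj

namespace IsJordanForm
variable {d r : ℕ} {J : Matrix (Fin d) (Fin d) ℂ}

theorem sub_diagonal_apply_of_ne_succ (hJ : IsJordanForm J r) {i j : Fin d}
    (hij : (j : ℕ) ≠ i + 1) : (J - diagonal J.diag) i j = 0 := by
  by_cases h : i = j
  · subst h
    simp
  · rw [Matrix.sub_apply, diagonal_apply_ne _ h, sub_zero]
    exact hJ.2.1 i j (fun h' => h (Fin.ext h'.symm)) hij

theorem sub_diagonal_apply_of_eq_succ {i j : Fin d} (hij : (j : ℕ) = i + 1) :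
    (J - diagonal J.diag) i j = J i j := by
  rw [Matrix.sub_apply, diagonal_apply_ne _ (Fin.ne_of_val_ne (by omega)), sub_zero]

theorem commute_diagonal_sub (hJ : IsJordanForm J r) :
    Commute (diagonal J.diag) (J - diagonal J.diag) := by
  refine Commute.sub_right ?_ (Commute.refl _)
  ext i j
  rw [diagonal_mul, mul_diagonal, diag_apply, diag_apply]
  by_cases hii : i = j
  · rw [hii, mul_comm]
  by_cases hij : (j : ℕ) = i + 1
  · rcases hJ.2.2.1 i j hij with h | ⟨-, h⟩
    · simp [h]
    · rw [h, mul_comm]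
  · simp [hJ.2.1 i j (fun h' => hii (Fin.ext h'.symm)) hij]

theorem l2_opNorm_sub_diagonal_le_one (hJ : IsJordanForm J r) :
    ‖J - diagonal J.diag‖ ≤ 1 := by
  have hsucc : ∀ i j : Fin d, (J - diagonal J.diag) i j ≠ 0 → (j : ℕ) = i + 1 :=
    fun i j h => by
      by_contra h'
      exact h (hJ.sub_diagonal_apply_of_ne_succ h')
  refine l2_opNorm_le_one_of_partial_perm
    (fun i j j' hj hj' => Fin.ext (by rw [hsucc i j hj, hsucc i j' hj']))
    (fun i i' j hi hi' => Fin.ext (by have := hsucc i j hi; have := hsucc i' j hi'; omega))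
    (fun i j => ?_)
  by_cases hij : (j : ℕ) = i + 1
  · rw [sub_diagonal_apply_of_eq_succ hij]
    rcases hJ.2.2.1 i j hij with h | ⟨h, -⟩ <;> simp [h]
  · simp [hJ.sub_diagonal_apply_of_ne_succ hij]

theorem sub_diagonal_pow_eq_zero (hJ : IsJordanForm J r) : (J - diagonal J.diag) ^ r = 0 := by
  -- a nonzero entry of the `r`-th power needs `r` consecutive superdiagonal ones
  ext i j
  by_contra hij
  obtain ⟨hj, hchain⟩ :=
    pow_apply_ne_zero_of_superdiag (fun _ _ => hJ.sub_diagonal_apply_of_ne_succ) r hij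
  obtain ⟨k, hk, hbreak⟩ := hJ.2.2.2 i (by omega)
  exact hchain ⟨i + k, by omega⟩ ⟨i + k + 1, by omega⟩ (by simp) rfl (by simp only; omega)
    (by rw [sub_diagonal_apply_of_eq_succ rfl]; exact hbreak)

theorem l2_opNorm_pow_le_sum_choose (hJ : IsJordanForm J r) (k : ℕ) :
    ‖J ^ k‖ ≤ ∑ m ∈ range r, (k.choose m : ℝ) := by
  simpa using norm_add_pow_le_sum_choose hJ.commute_diagonal_sub
    (l2_opNorm_pow_le_one (l2_opNorm_diagonal_le_one hJ.1))
    (l2_opNorm_pow_le_one hJ.l2_opNorm_sub_diagonal_le_one) hJ.sub_diagonal_pow_eq_zero k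

end IsJordanForm

theorem Matrix.conj_nonsing_inv_pow {n R : Type*} [Fintype n] [DecidableEq n] [CommRing R]
    {S : Matrix n n R} (hS : IsUnit S.det) (J : Matrix n n R) (k : ℕ) :
    (S * J * S⁻¹) ^ k = S * J ^ k * S⁻¹ := by
  obtain ⟨u, rfl⟩ := (isUnit_iff_isUnit_det S).mpr hS
  rw [← coe_units_inv, Units.conj_pow]

theorem jordan_power_norm_bound_general
    (d r : ℕ) (hr : 1 ≤ r) (CA : ℝ)
    (A : Matrix (Fin d) (Fin d) ℝ) (S J : Matrix (Fin d) (Fin d) ℂ)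
    (hS : IsUnit S.det)
    (hJ : IsJordanForm J r)
    (hdecomp : A.map (Complex.ofReal) = S * J * S⁻¹)
    (hnorm : cSpec2Norm S * cSpec2Norm S⁻¹ ≤ CA) :
    (∀ k : ℕ, 1 ≤ k → spec2Norm (A ^ k) ≤ (Nat.choose (k + r) (r - 1) : ℝ) * CA) ∧
    (∀ k : ℕ, (∑ s ∈ Finset.range (k + 1), spec2Norm (A ^ s)) ≤
      (Nat.choose (k + r + 1) r : ℝ) * CA) := by
  rw [cSpec2Norm_eq_l2_opNorm, cSpec2Norm_eq_l2_opNorm] at hnorm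
  have hCA : 0 ≤ CA := (by positivity : (0 : ℝ) ≤ ‖S‖ * ‖S⁻¹‖).trans hnorm
  have hpow : ∀ k, spec2Norm (A ^ k) ≤ ((k + r).choose (r - 1) : ℝ) * CA := fun k => calc
    spec2Norm (A ^ k) ≤ ‖(A ^ k).map Complex.ofReal‖ :=
      (spec2Norm_eq_l2_opNorm _).trans_le (l2_opNorm_le_map_ofReal _)
    _ = ‖S * J ^ k * S⁻¹‖ := by
      rw [show (A ^ k).map Complex.ofReal = A.map Complex.ofReal ^ k from
        A.map_pow Complex.ofRealHom k, hdecomp, conj_nonsing_inv_pow hS]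
    _ ≤ ‖S‖ * ‖J ^ k‖ * ‖S⁻¹‖ := (l2_opNorm_mul _ _).trans (by gcongr; exact l2_opNorm_mul _ _)
    _ = ‖J ^ k‖ * (‖S‖ * ‖S⁻¹‖) := by ring
    _ ≤ ((k + r).choose (r - 1) : ℝ) * CA := by
      gcongr
      exact (hJ.l2_opNorm_pow_le_sum_choose k).trans
        (by exact_mod_cast Nat.sum_range_choose_le_choose_add k r)
  refine ⟨fun k _ => hpow k, fun k => ?_⟩
  calc ∑ s ∈ range (k + 1), spec2Norm (A ^ s)
      ≤ ∑ s ∈ range (k + 1), ((s + r).choose (r - 1) : ℝ) * CA := sum_le_sum fun s _ => hpow s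
    _ = ((∑ s ∈ range (k + 1), (s + r).choose (r - 1) : ℕ) : ℝ) * CA := by
      rw [Nat.cast_sum, sum_mul]
    _ ≤ ((k + r + 1).choose r : ℝ) * CA := by
      gcongr
      exact_mod_cast Nat.sum_range_choose_add_le hr k

/-- For `A = S J S⁻¹` with Jordan blocks of size at most `r` and eigenvalues
of modulus at most 1, `‖A^k‖₂ ≤ C(k+r, r−1)·C_A` and `∑_{s≤k} ‖A^s‖₂ ≤ C(k+r+1, r)·C_A`. -/
theorem jordan_power_norm_bound
    (d r : ℕ) (hr : 1 ≤ r) (CA : ℝ) (hCA : 1 ≤ CA)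
    (A : Matrix (Fin d) (Fin d) ℝ) (S J : Matrix (Fin d) (Fin d) ℂ)
    (hS : IsUnit S.det)
    (hJ : IsJordanForm J r)
    (hdecomp : A.map (Complex.ofReal) = S * J * S⁻¹)
    (hnorm : cSpec2Norm S * cSpec2Norm S⁻¹ ≤ CA) :
    (∀ k : ℕ, 1 ≤ k → spec2Norm (A ^ k) ≤ (Nat.choose (k + r) (r - 1) : ℝ) * CA) ∧
    (∀ k : ℕ, (∑ s ∈ Finset.range (k + 1), spec2Norm (A ^ s)) ≤
      (Nat.choose (k + r + 1) r : ℝ) * CA) :=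
  jordan_power_norm_bound_general d r hr CA A S J hS hJ hdecomp hnorm
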